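/- arXiv:2110.01052 — 3 statements merged into one kernel-verified Lean document; each statement's English description precedes it below -/
import Mathlib

section
/- Let L_1, ..., L_n be i.i.d. random variables taking values in [0,1] with mean R = E[L_1], and let R̂ = (1/n)∑_{i=1}^n L_i. Fix α ∈ (0,1) and define h1(a,b) = a·log(a/b) + (1−a)·log((1−a)/(1−b)) (with the convention 0·log 0 = 0), and define the hybridized Hoeffding–Bentkus p-value p^HB = min( exp{−n·h1(min(R̂, α), α)}, e · P(Bin(n, α) ≤ ⌈n·R̂⌉) ), where Bin(n, α) denotes a Binomial random variable with n trials and success probability α. If R > α, then for every u ∈ [0,1], P(p^HB ≤ u) ≤ u. -/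
open MeasureTheory ProbabilityTheory

/-- The function `h1(a,b) = a log(a/b) + (1-a) log((1-a)/(1-b))` (relative entropy of
Bernoulli(a) with respect to Bernoulli(b)); `Real.log 0 = 0` gives the `0 log 0 = 0`
convention. -/
noncomputable def h1 (a b : ℝ) : ℝ :=
  a * Real.log (a / b) + (1 - a) * Real.log ((1 - a) / (1 - b))

/-- The binomial CDF: `P(Bin(n, p) ≤ k)` for an integer threshold `k`. -/
noncomputable def binomCDF (n : ℕ) (p : ℝ) (k : ℤ) : ℝ :=
  ∑ j ∈ Finset.range (n + 1),
    if (j : ℤ) ≤ k then (n.choose j : ℝ) * p ^ j * (1 - p) ^ (n - j) else 0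

/-!
Write `S = ∑ L_i`. For every convex nonincreasing `f`, `E f(S) ≤ E f(Bin(n, α))`: by convexity,
replacing one `L_i` by a Bernoulli variable with the same mean can only increase `E f`, and
lowering that mean to `α ≤ R` increases it further because `f` is nonincreasing.
With Markov's inequality, `f(x) = exp(t(na - x))` gives Hoeffding's bound
`P(S ≤ na) ≤ exp(-n h1(a, α))`, and the hinge `f(x) = (k + m - x)₊ / m` gives
`P(S ≤ k) ≤ (1/m) ∑_{y < k+m} P(Bin ≤ y)`; since `y ↦ P(Bin ≤ y)` is log-concave, a suitable
`m` makes the right side at most `e · P(Bin ≤ k)` (Bentkus).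
Hence `P(R̂ ≤ r) ≤ p^HB(r)` for all `r ∈ [0, 1]`. The sublevel sets of `p^HB` on `[0, 1]` are
closed, so `{p^HB(R̂) ≤ u} ⊆ {R̂ ≤ r*}` for the largest `r*` with `p^HB(r*) ≤ u`, and
`P(p^HB(R̂) ≤ u) ≤ p^HB(r*) ≤ u`.
-/

open Finset Real

noncomputable def binomPMF (n : ℕ) (p : ℝ) (j : ℕ) : ℝ :=
  (n.choose j : ℝ) * p ^ j * (1 - p) ^ (n - j)

noncomputable def binomMean (n : ℕ) (p : ℝ) (g : ℕ → ℝ) : ℝ :=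
  ∑ j ∈ range (n + 1), binomPMF n p j * g j

section Binomial

variable {n : ℕ} {p : ℝ}

lemma binomPMF_nonneg (hp0 : 0 ≤ p) (hp1 : p ≤ 1) (j : ℕ) : 0 ≤ binomPMF n p j := by
  have : 0 ≤ 1 - p := by linarith
  unfold binomPMF
  positivity

lemma binomPMF_pos (hp0 : 0 < p) (hp1 : p < 1) {j : ℕ} (hj : j ≤ n) : 0 < binomPMF n p j := by
  have : 0 < 1 - p := by linarith
  have : (0 : ℝ) < n.choose j := by exact_mod_cast Nat.choose_pos hj
  unfold binomPMF
  positivity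

lemma binomPMF_of_lt {j : ℕ} (hj : n < j) : binomPMF n p j = 0 := by
  simp [binomPMF, Nat.choose_eq_zero_of_lt hj]

lemma Nat.choose_mul_choose_succ_le {i j : ℕ} (hij : i ≤ j) :
    n.choose i * n.choose (j + 1) ≤ n.choose (i + 1) * n.choose j := by
  refine Nat.le_of_mul_le_mul_right ?_ (by positivity : 0 < (i + 1) * (j + 1))
  calc n.choose i * n.choose (j + 1) * ((i + 1) * (j + 1))
      = n.choose i * (n.choose (j + 1) * (j + 1)) * (i + 1) := by ring
    _ = n.choose i * n.choose j * ((n - j) * (i + 1)) := by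
        rw [Nat.choose_succ_right_eq]; ring
    _ ≤ n.choose i * n.choose j * ((n - i) * (j + 1)) :=
        Nat.mul_le_mul_left _ (Nat.mul_le_mul (Nat.sub_le_sub_left hij n) (by omega))
    _ = n.choose i * (n - i) * n.choose j * (j + 1) := by ring
    _ = n.choose (i + 1) * n.choose j * ((i + 1) * (j + 1)) := by
        rw [← Nat.choose_succ_right_eq]; ring

lemma binomPMF_mul_succ_le (hp0 : 0 ≤ p) (hp1 : p ≤ 1) {i j : ℕ} (hij : i ≤ j) :
    binomPMF n p i * binomPMF n p (j + 1) ≤ binomPMF n p (i + 1) * binomPMF n p j := by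
  rcases lt_or_ge n (j + 1) with hjn | hjn
  · rw [binomPMF_of_lt hjn, mul_zero]
    exact mul_nonneg (binomPMF_nonneg hp0 hp1 _) (binomPMF_nonneg hp0 hp1 _)
  have hq : 0 ≤ 1 - p := by linarith
  have hchoose :
      ((n.choose i * n.choose (j + 1) : ℕ) : ℝ) ≤ (n.choose (i + 1) * n.choose j : ℕ) :=
    Nat.cast_le.mpr (Nat.choose_mul_choose_succ_le hij)
  have hexp : n - (i + 1) + (n - j) = n - i + (n - (j + 1)) := by omega
  have hw : 0 ≤ p ^ (i + j + 1) * (1 - p) ^ (n - i + (n - (j + 1))) := by positivity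
  calc binomPMF n p i * binomPMF n p (j + 1)
      = ((n.choose i * n.choose (j + 1) : ℕ) : ℝ) *
          (p ^ (i + j + 1) * (1 - p) ^ (n - i + (n - (j + 1)))) := by
        unfold binomPMF; push_cast; ring
    _ ≤ ((n.choose (i + 1) * n.choose j : ℕ) : ℝ) *
          (p ^ (i + j + 1) * (1 - p) ^ (n - i + (n - (j + 1)))) :=
        mul_le_mul_of_nonneg_right hchoose hw
    _ = binomPMF n p (i + 1) * binomPMF n p j := by
        rw [← hexp]; unfold binomPMF; push_cast; ring

lemma binomCDF_natCast (k : ℕ) : binomCDF n p k = ∑ j ∈ range (k + 1), binomPMF n p j := by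
  rw [binomCDF, ← sum_filter]
  refine sum_subset (fun j hj => ?_) (fun j hj hj' => ?_)
  · simp only [mem_filter, mem_range] at hj ⊢; omega
  · simp only [mem_filter, mem_range, not_and, not_le] at hj hj'
    refine binomPMF_of_lt (not_le.mp fun h => ?_)
    have := hj' (by omega)
    omega

lemma binomCDF_natCast_succ (k : ℕ) :
    binomCDF n p (k + 1 : ℕ) = binomCDF n p k + binomPMF n p (k + 1) := by
  rw [binomCDF_natCast, binomCDF_natCast, sum_range_succ]

lemma binomCDF_of_le {k : ℤ} (hk : n ≤ k) : binomCDF n p k = 1 := by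
  have hsum := add_pow p (1 - p) n
  rw [add_sub_cancel, one_pow] at hsum
  refine Eq.trans (sum_congr rfl fun j hj => ?_) hsum.symm
  rw [if_pos (by simp only [mem_range] at hj; omega)]
  ring

lemma binomCDF_pos (hp0 : 0 ≤ p) (hp1 : p < 1) (k : ℕ) : 0 < binomCDF n p k := by
  rw [binomCDF_natCast]
  calc 0 < binomPMF n p 0 := by simp [binomPMF]; positivity
  _ ≤ _ := single_le_sum (fun j _ => binomPMF_nonneg hp0 hp1.le j) (by simp)

lemma binomCDF_monotone (hp0 : 0 ≤ p) (hp1 : p ≤ 1) : Monotone (binomCDF n p) := by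
  intro a b hab
  refine sum_le_sum fun j _ => ?_
  split_ifs with ha hb hb
  · rfl
  · omega
  · exact binomPMF_nonneg hp0 hp1 j
  · rfl

lemma binomMean_succ (g : ℕ → ℝ) : binomMean (n + 1) p g =
    (1 - p) * binomMean n p g + p * binomMean n p (fun j => g (j + 1)) := by
  have hA : (1 - p) * binomMean n p g =
      ∑ j ∈ range (n + 2), (n.choose j : ℝ) * p ^ j * (1 - p) ^ (n + 1 - j) * g j := by
    rw [binomMean, mul_sum, sum_range_succ _ (n + 1), Nat.choose_succ_self, Nat.cast_zero,
      zero_mul, zero_mul, zero_mul, add_zero]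
    refine sum_congr rfl fun j hj => ?_
    rw [binomPMF, Nat.sub_add_comm (Nat.lt_succ_iff.mp (mem_range.mp hj)), pow_succ]
    ring
  have hB : p * binomMean n p (fun j => g (j + 1)) = ∑ j ∈ range (n + 1),
      (n.choose j : ℝ) * p ^ (j + 1) * (1 - p) ^ (n + 1 - (j + 1)) * g (j + 1) := by
    rw [binomMean, mul_sum]
    refine sum_congr rfl fun j _ => ?_
    rw [binomPMF, Nat.add_sub_add_right]
    ring
  rw [hA, hB, binomMean, sum_range_succ' _ (n + 1), sum_range_succ' _ (n + 1), add_right_comm,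
    ← sum_add_distrib]
  congr 1
  · refine sum_congr rfl fun j _ => ?_
    rw [binomPMF, Nat.choose_succ_succ']
    push_cast
    ring
  · simp [binomPMF]

end Binomial

section LogConcave

lemma sum_range_mul_sum_range_add_two_le {q : ℕ → ℝ} (hq : ∀ j, 0 ≤ q j)
    (hq_lc : ∀ i j, i ≤ j → q i * q (j + 1) ≤ q (i + 1) * q j) (y : ℕ) :
    (∑ i ∈ range y, q i) * ∑ i ∈ range (y + 2), q i ≤
      (∑ i ∈ range (y + 1), q i) ^ 2 := by
  have key : (∑ i ∈ range y, q i) * q (y + 1) ≤ (∑ i ∈ range (y + 1), q i) * q y := by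
    calc (∑ i ∈ range y, q i) * q (y + 1) ≤ ∑ i ∈ range y, q (i + 1) * q y := by
          rw [sum_mul]; exact sum_le_sum fun i hi => hq_lc i y (mem_range.mp hi).le
      _ ≤ (∑ i ∈ range (y + 1), q i) * q y := by
          rw [← sum_mul, sum_range_succ' q y]
          exact mul_le_mul_of_nonneg_right (le_add_of_nonneg_right (hq 0)) (hq y)
  rw [sum_range_succ _ y] at key
  rw [sum_range_succ _ (y + 1), sum_range_succ _ y]
  linear_combination key

variable {F : ℕ → ℝ}

lemma mul_succ_le_succ_mul_of_logConcave (hpos : ∀ j, 0 < F j)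
    (hlc : ∀ j, F j * F (j + 2) ≤ F (j + 1) ^ 2) {a b : ℕ} (hab : a ≤ b) :
    F a * F (b + 1) ≤ F (a + 1) * F b := by
  induction b, hab using Nat.le_induction with
  | base => exact (mul_comm _ _).le
  | succ b _ ih =>
    refine le_of_mul_le_mul_right ?_ (hpos (b + 1))
    calc F a * F (b + 1 + 1) * F (b + 1) = F a * F (b + 1) * F (b + 2) := by ring
      _ ≤ F (a + 1) * F b * F (b + 2) := mul_le_mul_of_nonneg_right ih (hpos _).le
      _ = F (a + 1) * (F b * F (b + 2)) := by ring
      _ ≤ F (a + 1) * F (b + 1) ^ 2 := mul_le_mul_of_nonneg_left (hlc b) (hpos _).le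
      _ = F (a + 1) * F (b + 1) * F (b + 1) := by ring

lemma exists_pow_le_exp_one_mul {Q : ℝ} (hQ : 1 < Q) :
    ∃ m : ℕ, 1 ≤ m ∧ Q ^ m ≤ exp 1 * (m * (Q - 1)) := by
  have hlog : 0 < log Q := log_pos hQ
  set x := (log Q)⁻¹
  refine ⟨⌈x⌉₊, Nat.one_le_ceil_iff.mpr (by positivity), ?_⟩
  set s := (⌈x⌉₊ : ℝ) - x
  have hs0 : 0 ≤ s := sub_nonneg.mpr (Nat.le_ceil x)
  have hs1 : s ≤ 1 := by have := Nat.ceil_lt_add_one (inv_pos.mpr hlog).le; linarith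
  -- `m = ⌈1 / log Q⌉₊` makes `Q ^ m = e · Q ^ s` with `s = m - 1 / log Q ∈ [0, 1]`
  have hpow : Q ^ ⌈x⌉₊ = exp 1 * Q ^ s := by
    rw [← rpow_natCast, show (⌈x⌉₊ : ℝ) = x + s by ring, rpow_add (by linarith),
      rpow_def_of_pos (by linarith) x, mul_inv_cancel₀ hlog.ne']
  have hbern : Q ^ s ≤ 1 + s * (Q - 1) := by
    simpa using rpow_one_add_le_one_add_mul_self (by linarith : -1 ≤ Q - 1) hs0 hs1
  have hx : 1 ≤ x * (Q - 1) := by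
    rw [inv_mul_eq_div, le_div_iff₀ hlog, one_mul]
    exact log_le_sub_one_of_pos (by linarith)
  calc Q ^ ⌈x⌉₊ = exp 1 * Q ^ s := hpow
    _ ≤ exp 1 * (x * (Q - 1) + s * (Q - 1)) := by gcongr; linarith
    _ = exp 1 * (⌈x⌉₊ * (Q - 1)) := by ring

lemma exists_sum_range_le_exp_one_mul_of_logConcave (hpos : ∀ j, 0 < F j)
    (hlc : ∀ j, F j * F (j + 2) ≤ F (j + 1) ^ 2) {k : ℕ} (hk : F k < F (k + 1)) :
    ∃ m : ℕ, 1 ≤ m ∧ ∑ y ∈ range (k + m), F y ≤ exp 1 * (m * F k) := by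
  set Q := F (k + 1) / F k
  have hQ : 1 < Q := (one_lt_div (hpos k)).mpr hk
  have hlow : ∀ y < k, F y * Q ≤ F (y + 1) := fun y hy => by
    rw [mul_div_assoc', div_le_iff₀ (hpos k)]
    exact mul_succ_le_succ_mul_of_logConcave hpos hlc hy.le
  have hstep : ∀ j, F (k + j + 1) ≤ Q * F (k + j) := fun j => by
    rw [div_mul_eq_mul_div, le_div_iff₀ (hpos k)]
    linarith [mul_succ_le_succ_mul_of_logConcave hpos hlc (Nat.le_add_right k j)]
  have hbelow : (∑ y ∈ range k, F y) * (Q - 1) ≤ F k :=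
    calc (∑ y ∈ range k, F y) * (Q - 1) = ∑ y ∈ range k, (F y * Q - F y) := by
          rw [sum_mul]; exact sum_congr rfl fun y _ => by ring
      _ ≤ ∑ y ∈ range k, (F (y + 1) - F y) :=
          sum_le_sum fun y hy => by linarith [hlow y (mem_range.mp hy)]
      _ = F k - F 0 := sum_range_sub F k
      _ ≤ F k := by linarith [hpos 0]
  have habove : ∀ j, F (k + j) ≤ F k * Q ^ j := by
    intro j
    induction j with
    | zero => simp
    | succ j ih =>
      calc F (k + (j + 1)) ≤ Q * F (k + j) := hstep j
        _ ≤ Q * (F k * Q ^ j) := mul_le_mul_of_nonneg_left ih (by linarith)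
        _ = F k * Q ^ (j + 1) := by ring
  obtain ⟨m, hm, hQm⟩ := exists_pow_le_exp_one_mul hQ
  refine ⟨m, hm, le_of_mul_le_mul_right ?_ (sub_pos.mpr hQ)⟩
  rw [sum_range_add, add_mul]
  calc _ ≤ F k + (∑ j ∈ range m, F k * Q ^ j) * (Q - 1) :=
        add_le_add hbelow (mul_le_mul_of_nonneg_right (sum_le_sum fun j _ => habove j)
          (by linarith))
    _ = F k * Q ^ m := by rw [← mul_sum, mul_assoc, geom_sum_mul]; ring
    _ ≤ F k * (exp 1 * (m * (Q - 1))) := mul_le_mul_of_nonneg_left hQm (hpos k).le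
    _ = exp 1 * (m * F k) * (Q - 1) := by ring

end LogConcave

section BinomialMoments

variable {n : ℕ} {p : ℝ}

lemma binomCDF_logConcave (hp0 : 0 ≤ p) (hp1 : p ≤ 1) (k : ℕ) :
    binomCDF n p k * binomCDF n p (k + 2 : ℕ) ≤ binomCDF n p (k + 1 : ℕ) ^ 2 := by
  simp only [binomCDF_natCast]
  exact sum_range_mul_sum_range_add_two_le (binomPMF_nonneg hp0 hp1)
    (fun _ _ => binomPMF_mul_succ_le hp0 hp1) (k + 1)

lemma binomMean_max_sub (K : ℕ) :
    binomMean n p (fun j => max ((K : ℝ) - j) 0) = ∑ y ∈ range K, binomCDF n p y := by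
  induction K with
  | zero => simp [binomMean]
  | succ K ih =>
    rw [sum_range_succ, ← ih, binomMean, binomMean, binomCDF, ← sum_add_distrib]
    refine sum_congr rfl fun j _ => ?_
    push_cast
    split_ifs with h
    · have : (j : ℝ) ≤ K := by exact_mod_cast h
      rw [max_eq_left (by linarith), max_eq_left (by linarith), binomPMF]
      ring
    · have : (K : ℝ) + 1 ≤ j := by exact_mod_cast (by omega : K + 1 ≤ j)
      rw [max_eq_right (by linarith), max_eq_right (by linarith)]
      ring

lemma binomMean_exp_mul (t c : ℝ) : binomMean n p (fun j => exp (t * (c - j))) =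
    exp (t * c) * (p * exp (-t) + (1 - p)) ^ n := by
  rw [add_pow, mul_sum, binomMean]
  refine sum_congr rfl fun j _ => ?_
  have : exp (t * (c - j)) = exp (t * c) * exp (-t) ^ j := by
    rw [← exp_nat_mul, ← exp_add]
    ring_nf
  rw [this, binomPMF, mul_pow]
  ring

end BinomialMoments

lemma mul_log_div (x : ℝ) {y : ℝ} (hy : y ≠ 0) : x * log (x / y) = x * log x - x * log y := by
  rcases eq_or_ne x 0 with rfl | hx
  · simp
  · rw [log_div hx hy, mul_sub]

section RelativeEntropy

variable {b : ℝ}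

lemma h1_eq (a : ℝ) (hb0 : 0 < b) (hb1 : b < 1) :
    h1 a b = a * log a - a * log b + ((1 - a) * log (1 - a) - (1 - a) * log (1 - b)) := by
  rw [h1, mul_log_div _ hb0.ne', mul_log_div _ (sub_ne_zero.mpr hb1.ne')]

lemma h1_self (hb0 : 0 < b) (hb1 : b < 1) : h1 b b = 0 := by
  simp [h1, div_self hb0.ne', div_self (sub_ne_zero.mpr hb1.ne')]

lemma h1_zero_left : h1 0 b = -log (1 - b) := by
  simp [h1]

lemma continuous_h1_left (hb0 : 0 < b) (hb1 : b < 1) : Continuous fun a => h1 a b := by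
  simp_rw [h1_eq _ hb0 hb1]
  have h1a : Continuous fun a : ℝ => 1 - a := continuous_const.sub continuous_id
  exact (continuous_mul_log.sub (continuous_id.mul continuous_const)).add
    ((continuous_mul_log.comp h1a).sub (h1a.mul continuous_const))

end RelativeEntropy

lemma ConvexOn.comp_mul_add {g : ℝ → ℝ} (hg : ConvexOn ℝ Set.univ g) (a b : ℝ) :
    ConvexOn ℝ Set.univ fun x => g (a * x + b) := by
  refine ⟨convex_univ, fun x _ y _ s t hs ht hst => ?_⟩
  have := hg.2 (Set.mem_univ (a * x + b)) (Set.mem_univ (a * y + b)) hs ht hst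
  simp only [smul_eq_mul] at this ⊢
  convert this using 2
  linear_combination (-b) * hst

lemma sum_mem_Icc_card {ι : Type*} (s : Finset ι) {x : ι → ℝ}
    (hx : ∀ i, x i ∈ Set.Icc 0 1) :
    ∑ i ∈ s, x i ∈ Set.Icc 0 (s.card : ℝ) :=
  ⟨sum_nonneg fun i _ => (hx i).1, by simpa using sum_le_card_nsmul s x 1 fun i _ => (hx i).2⟩

section Comparison

variable {Ω : Type*} [MeasurableSpace Ω] {μ : Measure Ω} [IsProbabilityMeasure μ]

lemma integrable_comp_of_antitone {f : ℝ → ℝ} (hf : Antitone f) {Y : Ω → ℝ}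
    (hY : Measurable Y) {a b : ℝ} (hYab : ∀ ω, Y ω ∈ Set.Icc a b) :
    Integrable (fun ω => f (Y ω)) μ :=
  Integrable.of_bound (hf.measurable.comp hY).aestronglyMeasurable (max |f b| |f a|)
    (ae_of_all _ fun ω => abs_le_max_abs_abs (hf (hYab ω).2) (hf (hYab ω).1))

lemma integral_comp_add_le_of_indepFun {f : ℝ → ℝ} (hanti : Antitone f)
    (hconv : ConvexOn ℝ Set.univ f) {X Y : Ω → ℝ} (hX : Measurable X) (hY : Measurable Y)
    (hXY : IndepFun X Y μ) (hX01 : ∀ ω, X ω ∈ Set.Icc 0 1) {c : ℝ}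
    (hYc : ∀ ω, Y ω ∈ Set.Icc 0 c) {α : ℝ} (hαX : α ≤ ∫ ω, X ω ∂μ) :
    ∫ ω, f (X ω + Y ω) ∂μ ≤
      (1 - α) * ∫ ω, f (Y ω) ∂μ + α * ∫ ω, f (Y ω + 1) ∂μ := by
  set g : ℝ → ℝ := fun y => f (y + 1) - f y
  have hg : Measurable g := (hanti.measurable.comp (measurable_add_const 1)).sub hanti.measurable
  have hchord : ∀ ω, f (X ω + Y ω) ≤ f (Y ω) + X ω * g (Y ω) := fun ω => by
    have := hconv.2 (Set.mem_univ (Y ω)) (Set.mem_univ (Y ω + 1))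
      (sub_nonneg.mpr (hX01 ω).2) (hX01 ω).1 (by ring)
    simp only [smul_eq_mul] at this
    calc f (X ω + Y ω) = f ((1 - X ω) * Y ω + X ω * (Y ω + 1)) := by ring_nf
      _ ≤ _ := this
      _ = _ := by ring
  have hfXY : Integrable (fun ω => f (X ω + Y ω)) μ :=
    integrable_comp_of_antitone hanti (hX.add hY) (a := 0) (b := 1 + c) fun ω =>
      ⟨add_nonneg (hX01 ω).1 (hYc ω).1, add_le_add (hX01 ω).2 (hYc ω).2⟩
  have hfY : Integrable (fun ω => f (Y ω)) μ := integrable_comp_of_antitone hanti hY hYc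
  have hfY1 : Integrable (fun ω => f (Y ω + 1)) μ :=
    integrable_comp_of_antitone hanti (hY.add_const 1) (a := 1) (b := c + 1) fun ω =>
      ⟨by linarith [(hYc ω).1], by linarith [(hYc ω).2]⟩
  have hgY : Integrable (fun ω => g (Y ω)) μ := hfY1.sub hfY
  have hXgY : Integrable (fun ω => X ω * g (Y ω)) μ :=
    hgY.bdd_mul hX.aestronglyMeasurable (c := 1) (ae_of_all _ fun ω => by
      rw [Real.norm_eq_abs, abs_le]; constructor <;> linarith [(hX01 ω).1, (hX01 ω).2])
  have hindep : IndepFun X (fun ω => g (Y ω)) μ := hXY.comp measurable_id hg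
  have hgY_nonpos : ∫ ω, g (Y ω) ∂μ ≤ 0 :=
    integral_nonpos fun ω => sub_nonpos.mpr (hanti (by linarith))
  calc ∫ ω, f (X ω + Y ω) ∂μ ≤ ∫ ω, (f (Y ω) + X ω * g (Y ω)) ∂μ :=
        integral_mono hfXY (hfY.add hXgY) hchord
    _ = ∫ ω, f (Y ω) ∂μ + (∫ ω, X ω ∂μ) * ∫ ω, g (Y ω) ∂μ := by
        rw [integral_add hfY hXgY, hindep.integral_fun_mul_eq_mul_integral
          hX.aestronglyMeasurable (hg.comp hY).aestronglyMeasurable]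
    _ ≤ ∫ ω, f (Y ω) ∂μ + α * ∫ ω, g (Y ω) ∂μ :=
        add_le_add_right (mul_le_mul_of_nonpos_right hαX hgY_nonpos) _
    _ = (1 - α) * ∫ ω, f (Y ω) ∂μ + α * ∫ ω, f (Y ω + 1) ∂μ := by
        rw [integral_sub hfY1 hfY]
        ring

lemma integral_comp_sum_le_binomMean {ι : Type*} {L : ι → Ω → ℝ}
    (hmeas : ∀ i, Measurable (L i)) (hindep : iIndepFun L μ) (hbdd : ∀ i ω, L i ω ∈ Set.Icc 0 1)
    {α : ℝ} (hα0 : 0 ≤ α) (hα1 : α ≤ 1) (hmean : ∀ i, α ≤ ∫ ω, L i ω ∂μ) (s : Finset ι)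
    {f : ℝ → ℝ} (hanti : Antitone f) (hconv : ConvexOn ℝ Set.univ f) :
    ∫ ω, f (∑ i ∈ s, L i ω) ∂μ ≤ binomMean s.card α fun j => f j := by
  classical
  induction s using Finset.induction_on generalizing f with
  | empty => simp [binomMean, binomPMF]
  | insert a s ha ih =>
    have hY : Measurable fun ω => ∑ i ∈ s, L i ω := Finset.measurable_sum s fun i _ => hmeas i
    have hXY : IndepFun (L a) (fun ω => ∑ i ∈ s, L i ω) μ := by
      have h := (hindep.indepFun_finsetSum_of_notMem hmeas ha).symm
      rwa [Finset.sum_fn] at h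
    have hshift : ConvexOn ℝ Set.univ fun x => f (x + 1) := by
      simpa [add_comm] using hconv.comp_mul_add 1 1
    simp_rw [sum_insert ha, card_insert_of_notMem ha, binomMean_succ, Nat.cast_succ]
    have ih_shift := ih (fun x y h => hanti (by linarith)) hshift
    calc _ ≤ (1 - α) * ∫ ω, f (∑ i ∈ s, L i ω) ∂μ +
          α * ∫ ω, f (∑ i ∈ s, L i ω + 1) ∂μ :=
          integral_comp_add_le_of_indepFun hanti hconv (hmeas a) hY hXY (hbdd a)
            (fun ω => sum_mem_Icc_card s fun i => hbdd i ω) (hmean a)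
      _ ≤ _ := add_le_add (mul_le_mul_of_nonneg_left (ih hanti hconv) (by linarith))
          (mul_le_mul_of_nonneg_left ih_shift hα0)

end Comparison

section TailBounds

variable {Ω : Type*} [MeasurableSpace Ω] {μ : Measure Ω} [IsProbabilityMeasure μ]
  {n : ℕ} {L : Fin n → Ω → ℝ} {α : ℝ}

lemma measure_sum_le_le_binomMean (hmeas : ∀ i, Measurable (L i)) (hindep : iIndepFun L μ)
    (hbdd : ∀ i ω, L i ω ∈ Set.Icc 0 1) (hα0 : 0 ≤ α) (hα1 : α ≤ 1)
    (hmean : ∀ i, α ≤ ∫ ω, L i ω ∂μ) {f : ℝ → ℝ} (hanti : Antitone f)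
    (hconv : ConvexOn ℝ Set.univ f) (hf0 : ∀ x, 0 ≤ f x) {c : ℝ} (hfc : 1 ≤ f c) :
    μ {ω | ∑ i, L i ω ≤ c} ≤ ENNReal.ofReal (binomMean n α fun j => f j) := by
  have hint : Integrable (fun ω => f (∑ i, L i ω)) μ :=
    integrable_comp_of_antitone hanti (Finset.measurable_sum _ fun i _ => hmeas i)
      fun ω => by simpa using sum_mem_Icc_card univ fun i => hbdd i ω
  calc μ {ω | ∑ i, L i ω ≤ c} ≤ μ {ω | 1 ≤ f (∑ i, L i ω)} :=
        measure_mono fun ω hω => hfc.trans (hanti hω)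
    _ = ENNReal.ofReal (μ.real {ω | 1 ≤ f (∑ i, L i ω)}) :=
        (ofReal_measureReal (measure_ne_top _ _)).symm
    _ ≤ ENNReal.ofReal (∫ ω, f (∑ i, L i ω) ∂μ) := ENNReal.ofReal_le_ofReal <| by
        simpa using mul_meas_ge_le_integral_of_nonneg (ae_of_all _ fun ω => hf0 _) hint 1
    _ ≤ _ := ENNReal.ofReal_le_ofReal <| by
        simpa using
          integral_comp_sum_le_binomMean hmeas hindep hbdd hα0 hα1 hmean univ hanti hconv

lemma measure_sum_le_natCast_le_sum_binomCDF (hmeas : ∀ i, Measurable (L i))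
    (hindep : iIndepFun L μ) (hbdd : ∀ i ω, L i ω ∈ Set.Icc 0 1) (hα0 : 0 ≤ α) (hα1 : α ≤ 1)
    (hmean : ∀ i, α ≤ ∫ ω, L i ω ∂μ) (k : ℕ) {m : ℕ} (hm : 0 < m) :
    μ {ω | ∑ i, L i ω ≤ k} ≤
      ENNReal.ofReal ((∑ y ∈ range (k + m), binomCDF n α y) / m) := by
  have hm' : (0 : ℝ) < m := by exact_mod_cast hm
  have hconv : ConvexOn ℝ Set.univ fun x => max (((k + m : ℕ) : ℝ) - x) 0 / m := by
    refine ((((convexOn_id convex_univ).comp_mul_add (-1) ((k + m : ℕ) : ℝ)).sup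
      (convexOn_const 0 convex_univ)).smul (inv_nonneg.mpr hm'.le)).congr fun x _ => ?_
    simp only [Pi.sup_apply, id, smul_eq_mul]
    rw [div_eq_inv_mul]
    ring_nf
  have h := measure_sum_le_le_binomMean hmeas hindep hbdd hα0 hα1 hmean (c := k)
    (fun x y hxy => div_le_div_of_nonneg_right (max_le_max (by linarith) le_rfl) hm'.le) hconv
    (fun x => div_nonneg (le_max_right _ _) hm'.le)
    (by rw [Nat.cast_add, add_sub_cancel_left, max_eq_left hm'.le, div_self hm'.ne'])
  convert h using 2
  rw [← binomMean_max_sub, binomMean, binomMean, sum_div]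
  simp_rw [mul_div_assoc]

lemma measure_sum_le_natCast_le_exp_one_mul_binomCDF (hmeas : ∀ i, Measurable (L i))
    (hindep : iIndepFun L μ) (hbdd : ∀ i ω, L i ω ∈ Set.Icc 0 1) (hα0 : 0 < α) (hα1 : α < 1)
    (hmean : ∀ i, α ≤ ∫ ω, L i ω ∂μ) (k : ℕ) :
    μ {ω | ∑ i, L i ω ≤ k} ≤ ENNReal.ofReal (exp 1 * binomCDF n α k) := by
  rcases lt_or_ge k n with hk | hk
  · have hFk : binomCDF n α k < binomCDF n α (k + 1 : ℕ) := by
      rw [binomCDF_natCast_succ]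
      linarith [binomPMF_pos hα0 hα1 (Nat.succ_le_of_lt hk) (n := n)]
    obtain ⟨m, hm, hsum⟩ := exists_sum_range_le_exp_one_mul_of_logConcave
      (F := fun y => binomCDF n α y) (binomCDF_pos hα0.le hα1)
      (binomCDF_logConcave hα0.le hα1.le) hFk
    refine (measure_sum_le_natCast_le_sum_binomCDF hmeas hindep hbdd hα0.le hα1.le hmean k hm
      ).trans (ENNReal.ofReal_le_ofReal ?_)
    rw [div_le_iff₀ (by exact_mod_cast hm)]
    linarith
  · rw [binomCDF_of_le (by exact_mod_cast hk), mul_one]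
    exact prob_le_one.trans (ENNReal.one_le_ofReal.mpr (one_le_exp zero_le_one))

lemma measure_sum_le_mul_le_exp_neg_mul_h1 (hmeas : ∀ i, Measurable (L i))
    (hindep : iIndepFun L μ) (hbdd : ∀ i ω, L i ω ∈ Set.Icc 0 1) (hα0 : 0 < α) (hα1 : α < 1)
    (hmean : ∀ i, α ≤ ∫ ω, L i ω ∂μ) {a : ℝ} (ha : 0 ≤ a) :
    μ {ω | ∑ i, L i ω ≤ n * a} ≤ ENNReal.ofReal (exp (-n * h1 (min a α) α)) := by
  rcases le_or_gt α a with haα | haα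
  · rw [min_eq_right haα, h1_self hα0 hα1, mul_zero, exp_zero, ENNReal.ofReal_one]
    exact prob_le_one
  rw [min_eq_left haα.le]
  have hα1' : 0 < 1 - α := by linarith
  rcases ha.eq_or_lt with rfl | ha0
  · -- the optimal Chernoff exponent is infinite at `a = 0`; the hinge with `k = 0`, `m = 1` gives
    -- `P(S ≤ 0) ≤ P(Bin = 0) = (1 - α) ^ n` instead
    have h :=
      measure_sum_le_natCast_le_sum_binomCDF hmeas hindep hbdd hα0.le hα1.le hmean 0 one_pos
    rw [zero_add, sum_range_one, Nat.cast_one, div_one, binomCDF_natCast, sum_range_one,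
      binomPMF] at h
    rw [mul_zero, h1_zero_left, neg_mul_neg, exp_nat_mul, exp_log hα1']
    simpa using h
  · -- the optimal Chernoff exponent `t = log (α (1 - a) / (a (1 - α)))`
    set t := log α - log a + (log (1 - a) - log (1 - α)) with ht_def
    have ht : 0 < t := by
      have := log_lt_log ha0 haα
      have := log_lt_log hα1' (by linarith : 1 - α < 1 - a)
      linarith
    have hconv : ConvexOn ℝ Set.univ fun x => exp (t * (n * a - x)) := by
      convert convexOn_exp.comp_mul_add (-t) (t * (n * a)) using 3
      ring
    have h := measure_sum_le_le_binomMean hmeas hindep hbdd hα0.le hα1.le hmean (c := n * a)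
      (fun x y hxy => exp_le_exp.mpr (mul_le_mul_of_nonneg_left (by linarith) ht.le)) hconv
      (fun x => (exp_pos _).le) (by simp)
    rw [binomMean_exp_mul] at h
    convert h using 2
    have ha1 : 0 < 1 - a := by linarith
    have hmgf : α * exp (-t) + (1 - α) = exp (log (1 - α) - log (1 - a)) := by
      rw [show -t = log a - log α + (log (1 - α) - log (1 - a)) by ring, exp_add, exp_sub,
        exp_sub, exp_log ha0, exp_log hα0, exp_log hα1', exp_log ha1]
      field_simp
      ring
    rw [hmgf, ← exp_nat_mul, ← exp_add, h1_eq a hα0 hα1, ht_def]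
    ring_nf

end TailBounds

lemma measure_le_of_isClosed_sublevel {Ω : Type*} [MeasurableSpace Ω] {μ : Measure Ω}
    {X : Ω → ℝ} {K : Set ℝ} (hK : BddAbove K) (hX : ∀ ω, X ω ∈ K) {G : ℝ → ℝ}
    (hG : ∀ t ∈ K, μ {ω | X ω ≤ t} ≤ ENNReal.ofReal (G t)) {u : ℝ}
    (hclosed : IsClosed (K ∩ G ⁻¹' Set.Iic u)) :
    μ {ω | G (X ω) ≤ u} ≤ ENNReal.ofReal u := by
  set D := K ∩ G ⁻¹' Set.Iic u
  have hXD : ∀ ω, G (X ω) ≤ u → X ω ∈ D := fun ω hω => ⟨hX ω, hω⟩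
  rcases D.eq_empty_or_nonempty with hD | hD
  · have : {ω | G (X ω) ≤ u} = ∅ :=
      Set.eq_empty_of_forall_notMem fun ω hω => by simpa [hD] using hXD ω hω
    simp [this]
  · have hDbdd : BddAbove D := hK.mono Set.inter_subset_left
    have hsup := hclosed.csSup_mem hD hDbdd
    calc μ {ω | G (X ω) ≤ u} ≤ μ {ω | X ω ≤ sSup D} :=
          measure_mono fun ω hω => le_csSup hDbdd (hXD ω hω)
      _ ≤ ENNReal.ofReal (G (sSup D)) := hG _ hsup.1
      _ ≤ ENNReal.ofReal u := ENNReal.ofReal_le_ofReal hsup.2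

lemma isClosed_setOf_comp_ceil_le {g : ℤ → ℝ} (hg : Monotone g) (v : ℝ) :
    IsClosed {t : ℝ | g ⌈t⌉ ≤ v} := by
  rw [← isOpen_compl_iff, isOpen_iff_forall_mem_open]
  intro t ht
  refine ⟨Set.Ioi ((⌈t⌉ : ℝ) - 1), fun s hs hs' => ht ((hg ?_).trans hs'), isOpen_Ioi, ?_⟩
  · exact Int.le_ceil_iff.mpr hs
  · simpa [sub_lt_iff_lt_add] using Int.ceil_lt_add_one t

noncomputable def hoeffdingBentkus (n : ℕ) (α r : ℝ) : ℝ :=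
  min (exp (-n * h1 (min r α) α)) (exp 1 * binomCDF n α ⌈n * r⌉)

lemma isClosed_Icc_inter_hoeffdingBentkus_preimage_Iic {n : ℕ} {α : ℝ} (hα0 : 0 < α)
    (hα1 : α < 1) (u : ℝ) :
    IsClosed (Set.Icc 0 1 ∩ hoeffdingBentkus n α ⁻¹' Set.Iic u) := by
  have hsplit : Set.Icc 0 1 ∩ hoeffdingBentkus n α ⁻¹' Set.Iic u =
      (Set.Icc 0 1 ∩ (fun r => exp (-n * h1 (min r α) α)) ⁻¹' Set.Iic u) ∪
        (Set.Icc 0 1 ∩ (fun r : ℝ => exp 1 * binomCDF n α ⌈n * r⌉) ⁻¹' Set.Iic u) := by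
    ext r
    simp [hoeffdingBentkus, and_or_left]
  rw [hsplit]
  refine (isClosed_Icc.inter (isClosed_Iic.preimage ?_)).union (isClosed_Icc.inter
    ((isClosed_setOf_comp_ceil_le (g := fun k => exp 1 * binomCDF n α k) ?_ u).preimage
      (continuous_const.mul continuous_id)))
  · exact continuous_exp.comp (continuous_const.mul
      ((continuous_h1_left hα0 hα1).comp (continuous_id.min continuous_const)))
  · exact fun a b h =>
      mul_le_mul_of_nonneg_left (binomCDF_monotone hα0.le hα1.le h) (exp_pos 1).le

lemma mean_mem_Icc {Ω : Type*} {n : ℕ} {L : Fin n → Ω → ℝ}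
    (hbdd : ∀ i ω, L i ω ∈ Set.Icc 0 1) (ω : Ω) :
    1 / (n : ℝ) * ∑ i, L i ω ∈ Set.Icc 0 1 := by
  have := sum_mem_Icc_card univ fun i => hbdd i ω
  rw [card_univ, Fintype.card_fin] at this
  rw [one_div_mul_eq_div]
  exact ⟨div_nonneg this.1 n.cast_nonneg, div_le_one_of_le₀ this.2 n.cast_nonneg⟩

section EmpiricalMean

variable {Ω : Type*} [MeasurableSpace Ω] {μ : Measure Ω} [IsProbabilityMeasure μ]
  {n : ℕ} {L : Fin n → Ω → ℝ} {α : ℝ}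

lemma measure_mean_le_le_hoeffdingBentkus (hmeas : ∀ i, Measurable (L i))
    (hindep : iIndepFun L μ) (hbdd : ∀ i ω, L i ω ∈ Set.Icc 0 1) (hα0 : 0 < α) (hα1 : α < 1)
    (hmean : ∀ i, α ≤ ∫ ω, L i ω ∂μ) {r : ℝ} (hr : 0 ≤ r) :
    μ {ω | 1 / (n : ℝ) * ∑ i, L i ω ≤ r} ≤ ENNReal.ofReal (hoeffdingBentkus n α r) := by
  have hsub : {ω | 1 / (n : ℝ) * ∑ i, L i ω ≤ r} ⊆ {ω | ∑ i, L i ω ≤ n * r} := by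
    intro ω (hω : 1 / (n : ℝ) * ∑ i, L i ω ≤ r)
    rcases n.eq_zero_or_pos with rfl | hn
    · simp
    · rwa [one_div_mul_eq_div, div_le_iff₀' (by positivity)] at hω
  have hceil : ((⌈n * r⌉.toNat : ℕ) : ℤ) = ⌈n * r⌉ :=
    Int.toNat_of_nonneg (Int.ceil_nonneg (mul_nonneg n.cast_nonneg hr))
  rw [hoeffdingBentkus, ENNReal.ofReal_min]
  refine le_min ((measure_mono hsub).trans
    (measure_sum_le_mul_le_exp_neg_mul_h1 hmeas hindep hbdd hα0 hα1 hmean hr)) ?_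
  refine (measure_mono (hsub.trans fun ω (hω : ∑ i, L i ω ≤ n * r) => ?_)).trans
    ((measure_sum_le_natCast_le_exp_one_mul_binomCDF hmeas hindep hbdd hα0 hα1 hmean
      ⌈n * r⌉.toNat).trans_eq (by rw [hceil]))
  exact hω.trans ((Int.le_ceil _).trans_eq (by exact_mod_cast hceil.symm))

end EmpiricalMean

theorem hoeffding_bentkus_p_value_general
    {Ω : Type*} [MeasurableSpace Ω] (μ : Measure Ω) [IsProbabilityMeasure μ]
    {n : ℕ} (L : Fin n → Ω → ℝ)
    (hmeas : ∀ i, Measurable (L i))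
    (hiid_indep : iIndepFun L μ)
    (hbdd : ∀ i ω, L i ω ∈ Set.Icc (0 : ℝ) 1)
    (R : ℝ) (hmean : ∀ i, ∫ ω, L i ω ∂μ = R)
    (α : ℝ) (hα : α ∈ Set.Ioo (0 : ℝ) 1)
    (Rhat : Ω → ℝ) (hRhat : ∀ ω, Rhat ω = (1 / (n : ℝ)) * ∑ i, L i ω)
    (pHB : Ω → ℝ)
    (hpHB : ∀ ω, pHB ω =
      min (Real.exp (-(n : ℝ) * h1 (min (Rhat ω) α) α))
        (Real.exp 1 * binomCDF n α ⌈(n : ℝ) * Rhat ω⌉))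
    (hnull : R > α) :
    ∀ u ∈ Set.Icc (0 : ℝ) 1, μ {ω | pHB ω ≤ u} ≤ ENNReal.ofReal u := by
  intro u _
  obtain ⟨hα0, hα1⟩ := hα
  obtain rfl : pHB = fun ω => hoeffdingBentkus n α (Rhat ω) := funext hpHB
  obtain rfl : Rhat = fun ω => 1 / (n : ℝ) * ∑ i, L i ω := funext hRhat
  have hmean' : ∀ i, α ≤ ∫ ω, L i ω ∂μ := fun i => (hmean i).symm ▸ hnull.le
  exact measure_le_of_isClosed_sublevel bddAbove_Icc (mean_mem_Icc hbdd)
    (fun r hr => measure_mean_le_le_hoeffdingBentkus hmeas hiid_indep hbdd hα0 hα1 hmean' hr.1)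
    (isClosed_Icc_inter_hoeffdingBentkus_preimage_Iic hα0 hα1 u)

/-- The hybridized Hoeffding–Bentkus p-value is a valid p-value for the
null hypothesis `R > α`, where `R` is the common mean of i.i.d. `[0,1]`-valued losses. -/
theorem hoeffding_bentkus_p_value
    {Ω : Type*} [MeasurableSpace Ω] (μ : Measure Ω) [IsProbabilityMeasure μ]
    {n : ℕ} (hn : 0 < n) (L : Fin n → Ω → ℝ)
    (hmeas : ∀ i, Measurable (L i))
    (hiid_indep : iIndepFun L μ)
    (hiid_ident : ∀ i, IdentDistrib (L i) (L ⟨0, hn⟩) μ μ)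
    (hbdd : ∀ i ω, L i ω ∈ Set.Icc (0 : ℝ) 1)
    (R : ℝ) (hmean : ∀ i, ∫ ω, L i ω ∂μ = R)
    (α : ℝ) (hα : α ∈ Set.Ioo (0 : ℝ) 1)
    (Rhat : Ω → ℝ) (hRhat : ∀ ω, Rhat ω = (1 / (n : ℝ)) * ∑ i, L i ω)
    (pHB : Ω → ℝ)
    (hpHB : ∀ ω, pHB ω =
      min (Real.exp (-(n : ℝ) * h1 (min (Rhat ω) α) α))
        (Real.exp 1 * binomCDF n α ⌈(n : ℝ) * Rhat ω⌉))
    (hnull : R > α) :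
    ∀ u ∈ Set.Icc (0 : ℝ) 1, μ {ω | pHB ω ≤ u} ≤ ENNReal.ofReal u :=
  hoeffding_bentkus_p_value_general μ L hmeas hiid_indep hbdd R hmean α hα Rhat hRhat pHB hpHB hnull
end

section
/- Let Z_1, ..., Z_{n+n'} be i.i.d. random variables in a measurable space 𝒵, Λ a countable index set, and S : Λ × 𝒵 → [0,1] measurable in its second argument. Let ŝ_n(λ) = (1/n)∑_{i=1}^n S(λ; Z_i), ŝ_{n'}(λ) = (1/n')∑_{i=n+1}^{n+n'} S(λ; Z_i), ŝ_{n+n'}(λ) = (1/(n+n'))∑_{i=1}^{n+n'} S(λ; Z_i), and s(λ) = E[S(λ; Z_1)]. Then for every η ≥ 0, t > 0, and γ ∈ (0,1), with κ⁺ = η + t²/2 + t·√(t²/4 + η): P( sup_{λ ∈ Λ} (ŝ_n(λ) − ŝ_{n'}(λ))/√(ŝ_{n+n'}(λ) + η) ≥ (1−γ)t ) ≥ P( sup_{λ ∈ Λ} (ŝ_n(λ) − s(λ))/√(ŝ_n(λ) + η) ≥ t ) · inf_{λ ∈ Λ} P( (ŝ_{n'}(λ) − s(λ))/√(s(λ)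 + κ⁺) ≤ γt ). -/
open MeasureTheory ProbabilityTheory

/-- `κ⁺ = η + t²/2 + t·√(t²/4 + η)`. -/
noncomputable def kappaPlus (t η : ℝ) : ℝ :=
  η + t ^ 2 / 2 + t * Real.sqrt (t ^ 2 / 4 + η)

open Set Filter Topology Real Function
open scoped ENNReal

/-!
If `(ŝ_n(λ) - s(λ)) / √(ŝ_n(λ) + η) ≥ t' > 0`, then `ŝ_n(λ) + η ≥ s(λ) + κ⁺(t')`; if moreover the
ghost mean satisfies `(ŝ_{n'}(λ) - s(λ)) / √(s(λ) + κ⁺(t)) ≤ γ t`, then `ŝ_{n'}(λ) ≤ ŝ_n(λ)`, hence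
`ŝ_{n+n'}(λ) ≤ ŝ_n(λ)`, and the symmetrized ratio at `λ` is at least
`t' - γ t √(κ⁺(t) / κ⁺(t'))`. Choosing, as a measurable function of the first sample, an index `λ`
at which the first deviation exceeds `t'`, and using the independence of the ghost sample, the
probability of the symmetrized event at this level is at least the product in the statement.
The supremum need not be attained, which is why `t' < t`; letting `t' ↑ t` gives the level
`(1 - γ) t`.
-/

section Real

variable {a b p q s t t' η γ : ℝ}

lemma kappaPlus_pos (ht : 0 < t) (hη : 0 ≤ η) : 0 < kappaPlus t η := by
  unfold kappaPlus; positivity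

lemma kappaPlus_le_kappaPlus (ht' : 0 ≤ t') (htt' : t' ≤ t) :
    kappaPlus t' η ≤ kappaPlus t η := by
  unfold kappaPlus
  have : √(t' ^ 2 / 4 + η) ≤ √(t ^ 2 / 4 + η) := by gcongr
  gcongr
  exact ht'.trans htt'

lemma continuous_kappaPlus : Continuous fun t ↦ kappaPlus t η := by
  unfold kappaPlus; fun_prop

/-- `√(a + η)` must exceed the larger root `t / 2 + √(t² / 4 + s + η)` of `x² - t x - (s + η)`. -/
lemma add_kappaPlus_le_of_le_div_sqrt (ht : 0 < t) (hs : 0 ≤ s) (hη : 0 ≤ η)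
    (h : t ≤ (a - s) / √(a + η)) : s + kappaPlus t η ≤ a + η := by
  set x := √(a + η)
  have hx : 0 < x := by
    by_contra! hx0
    rw [le_antisymm hx0 (sqrt_nonneg _), div_zero] at h
    linarith
  have hx2 : x ^ 2 = a + η := sq_sqrt (sqrt_pos.1 hx).le
  have hquad : t * x ≤ x ^ 2 - (s + η) := by rw [hx2]; linarith [(le_div_iff₀ hx).1 h]
  set D := √(t ^ 2 / 4 + s + η)
  have hD2 : D ^ 2 = t ^ 2 / 4 + s + η := sq_sqrt (by positivity)
  have hDt : t / 2 ≤ D := le_sqrt_of_sq_le (by linarith)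
  have hroot : t / 2 + D ≤ x := by nlinarith
  have hE : √(t ^ 2 / 4 + η) ≤ D := sqrt_le_sqrt (by linarith)
  unfold kappaPlus
  nlinarith [mul_le_mul_of_nonneg_left hE ht.le]

lemma le_div_sqrt_of_le_div_sqrt_of_div_sqrt_le (hp : 0 < p) (hq : 0 ≤ q) (hb : 0 ≤ b)
    (hs : 0 ≤ s) (hη : 0 ≤ η) (ht' : 0 < t') (htt' : t' ≤ t) (hγ : 0 ≤ γ)
    (ha : t' ≤ (a - s) / √(a + η)) (hb' : (b - s) / √(s + kappaPlus t η) ≤ γ * t)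
    (hρ : 0 ≤ t' - γ * t * √(kappaPlus t η / kappaPlus t' η)) :
    t' - γ * t * √(kappaPlus t η / kappaPlus t' η) ≤
      (a - b) / √((p * a + q * b) / (p + q) + η) := by
  have hκ' := kappaPlus_pos ht' hη
  have hκ := kappaPlus_le_kappaPlus ht'.le htt' (η := η)
  have hsa : s + kappaPlus t' η ≤ a + η := add_kappaPlus_le_of_le_div_sqrt ht' hs hη ha
  set R := √(kappaPlus t η / kappaPlus t' η)
  set ρ := t' - γ * t * R
  have hx : 0 < √(a + η) := sqrt_pos.2 (by linarith)
  have hdev : t' * √(a + η) ≤ a - s := (le_div_iff₀ hx).1 ha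
  have hghost : b - s ≤ γ * t * (R * √(a + η)) := calc
    b - s ≤ γ * t * √(s + kappaPlus t η) := (div_le_iff₀ (sqrt_pos.2 (by linarith))).1 hb'
    _ ≤ γ * t * (R * √(a + η)) := by
      have h1 : 1 ≤ kappaPlus t η / kappaPlus t' η := (one_le_div hκ').2 hκ
      have h2 : s + kappaPlus t η ≤ kappaPlus t η / kappaPlus t' η * (a + η) := calc
        s + kappaPlus t η ≤ kappaPlus t η / kappaPlus t' η * (s + kappaPlus t' η) := by
          rw [mul_add, div_mul_cancel₀ _ hκ'.ne']; nlinarith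
        _ ≤ _ := by gcongr
      have h3 : 0 ≤ γ * t := mul_nonneg hγ (ht'.le.trans htt')
      rw [← sqrt_mul (by linarith)]
      gcongr
  have hab : ρ * √(a + η) ≤ a - b := by linarith
  have hba : b ≤ a := by nlinarith [mul_nonneg hρ hx.le]
  have hca : (p * a + q * b) / (p + q) ≤ a := by
    rw [div_le_iff₀ (by linarith)]; nlinarith
  have hc : 0 < (p * a + q * b) / (p + q) + η := by
    have hpq : 0 < p + q := by linarith
    have : 0 < p * a + q * b + η * (p + q) := by nlinarith
    rw [div_add' _ _ _ hpq.ne']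
    exact div_pos this hpq
  rw [le_div_iff₀ (sqrt_pos.2 hc)]
  calc ρ * √((p * a + q * b) / (p + q) + η) ≤ ρ * √(a + η) := by gcongr
    _ ≤ a - b := hab

lemma div_sqrt_weightedMean_le (hp : 0 < p) (hq : 0 ≤ q) (ha : a ∈ Icc (0 : ℝ) 1)
    (hb : b ∈ Icc (0 : ℝ) 1) (hη : 0 ≤ η) :
    (a - b) / √((p * a + q * b) / (p + q) + η) ≤ (p + q) / p * √(1 + η) := by
  set c := (p * a + q * b) / (p + q)
  have hpq : 0 < p + q := by linarith
  have hc0 : 0 ≤ c := by obtain ⟨_, _⟩ := ha; obtain ⟨_, _⟩ := hb; positivity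
  have hc1 : c ≤ 1 := by rw [div_le_one hpq]; nlinarith [ha.2, hb.2]
  have hK : 0 ≤ (p + q) / p := by positivity
  have hac : a ≤ (p + q) / p * c := calc
    a ≤ a + q * b / p := le_add_of_nonneg_right (div_nonneg (mul_nonneg hq hb.1) hp.le)
    _ = (p + q) / p * c := by simp only [c]; field_simp
  rcases (sqrt_nonneg (c + η)).eq_or_lt with h | h
  · rw [← h, div_zero]; positivity
  rw [div_le_iff₀ h]
  have hsq : √(c + η) * √(c + η) = c + η := mul_self_sqrt (by linarith)
  calc a - b ≤ (p + q) / p * (√(c + η) * √(c + η)) := by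
          rw [hsq]; nlinarith [hb.1, mul_nonneg hK hη]
    _ ≤ (p + q) / p * (√(1 + η) * √(c + η)) := by gcongr
    _ = _ := by ring

lemma exists_lt_sub_mul_sqrt_kappaPlus_div {c : ℝ} (ht : 0 < t) (hη : 0 ≤ η)
    (hc : c < (1 - γ) * t) :
    ∃ t' ∈ Ioo 0 t, c < t' - γ * t * √(kappaPlus t η / kappaPlus t' η) := by
  have hκ := (kappaPlus_pos ht hη).ne'
  have hφ : ContinuousAt (fun t' ↦ t' - γ * t * √(kappaPlus t η / kappaPlus t' η)) t :=
    continuousAt_id.sub <| continuousAt_const.mul <|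
      (continuousAt_const.div continuous_kappaPlus.continuousAt hκ).sqrt
  have hφt : t - γ * t * √(kappaPlus t η / kappaPlus t η) = (1 - γ) * t := by
    rw [div_self hκ, sqrt_one]; ring
  rw [← hφt] at hc
  exact (Filter.Eventually.and (Ioo_mem_nhdsLT ht)
    (nhdsWithin_le_nhds (hφ.eventually (lt_mem_nhds hc)))).exists

lemma one_div_mul_sum_mem_Icc {m : ℕ} {f : Fin m → ℝ} (hf : ∀ i, f i ∈ Icc (0 : ℝ) 1) :
    1 / (m : ℝ) * ∑ i, f i ∈ Icc (0 : ℝ) 1 := by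
  have hsum : ∑ i, f i ≤ m := by
    simpa using Finset.sum_le_card_nsmul Finset.univ f 1 fun i _ ↦ (hf i).2
  refine ⟨mul_nonneg (by positivity) (Finset.sum_nonneg fun i _ ↦ (hf i).1), ?_⟩
  rw [one_div_mul_eq_div]
  exact div_le_one_of_le₀ hsum m.cast_nonneg

lemma natCast_mul_one_div_mul_sum {m : ℕ} (f : Fin m → ℝ) :
    m * (1 / (m : ℝ) * ∑ i, f i) = ∑ i, f i := by
  rcases m.eq_zero_or_pos with rfl | hm
  · simp
  · field_simp

end Real

section Measure

variable {Ω α β ι : Type*} {mΩ : MeasurableSpace Ω} [MeasurableSpace α] [MeasurableSpace β]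
  {μ : Measure Ω}

lemma exists_pairwise_disjoint_measurableSet_subset_iUnion_eq [Countable ι]
    {A : ι → Set α} (hA : ∀ i, MeasurableSet (A i)) :
    ∃ A' : ι → Set α, (∀ i, MeasurableSet (A' i)) ∧ (∀ i, A' i ⊆ A i) ∧
      Pairwise (Disjoint on A') ∧ ⋃ i, A' i = ⋃ i, A i := by
  obtain ⟨e, he⟩ := Countable.exists_injective_nat ι
  refine ⟨fun i ↦ A i \ ⋃ (j) (_ : e j < e i), A j,
    fun i ↦ (hA i).diff (.iUnion fun j ↦ .iUnion fun _ ↦ hA j), fun i ↦ sdiff_subset, ?_, ?_⟩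
  · intro i j hij
    wlog h : e i < e j generalizing i j
    · exact (this hij.symm ((he.ne hij).lt_or_gt.resolve_left h)).symm
    exact disjoint_left.2 fun x hi hj ↦ hj.2 (mem_biUnion h hi.1)
  · refine (iUnion_mono fun i ↦ sdiff_subset).antisymm (iUnion_subset fun i x hx ↦ ?_)
    obtain ⟨j, hj, hmin⟩ := (InvImage.wf e wellFounded_lt).has_min {j | x ∈ A j} ⟨i, hx⟩
    exact mem_iUnion.2 ⟨j, hj, by simpa using fun k (hkj : e k < e j) hk ↦ hmin k hk hkj⟩

lemma le_measure_setOf_le_of_forall_lt [IsFiniteMeasure μ] {f : Ω → ℝ}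
    (hf : Measurable f) {L : ℝ≥0∞} {a : ℝ} (h : ∀ c < a, L ≤ μ {ω | c ≤ f ω}) :
    L ≤ μ {ω | a ≤ f ω} := by
  obtain ⟨u, hu_mono, hu_lt, hu_lim⟩ := exists_seq_strictMono_tendsto a
  have hinter : {ω | a ≤ f ω} = ⋂ k, {ω | u k ≤ f ω} := by
    ext ω
    simp only [mem_iInter]
    exact ⟨fun h k ↦ (hu_lt k).le.trans h, fun h ↦ le_of_tendsto' hu_lim h⟩
  rw [hinter, Antitone.measure_iInter (s := fun k ↦ {ω | u k ≤ f ω})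
    (fun k l hkl ω hω ↦ (hu_mono.monotone hkl).trans hω)
    (fun k ↦ (measurableSet_le measurable_const hf).nullMeasurableSet) ⟨0, measure_ne_top _ _⟩]
  exact le_iInf fun k ↦ h _ (hu_lt k)

namespace ProbabilityTheory

lemma IndepFun.measure_preimage_iUnion_mul_iInf_le [Countable ι] {X : Ω → α} {Y : Ω → β}
    (hXY : IndepFun X Y μ) (hX : Measurable X) (hY : Measurable Y) {A : ι → Set α}
    {B : ι → Set β} (hA : ∀ i, MeasurableSet (A i)) (hB : ∀ i, MeasurableSet (B i)) :
    μ (X ⁻¹' ⋃ i, A i) * ⨅ i, μ (Y ⁻¹' B i) ≤ μ (⋃ i, X ⁻¹' A i ∩ Y ⁻¹' B i) := by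
  obtain ⟨A', hA'm, hA'A, hdisj, hA'U⟩ :=
    exists_pairwise_disjoint_measurableSet_subset_iUnion_eq hA
  have hdisjX : Pairwise (Disjoint on fun i ↦ X ⁻¹' A' i) := fun i j h ↦ (hdisj h).preimage X
  calc μ (X ⁻¹' ⋃ i, A i) * ⨅ i, μ (Y ⁻¹' B i)
      = ∑' i, μ (X ⁻¹' A' i) * ⨅ i, μ (Y ⁻¹' B i) := by
        rw [← hA'U, preimage_iUnion, measure_iUnion hdisjX fun i ↦ hX (hA'm i),
          ENNReal.tsum_mul_right]
    _ ≤ ∑' i, μ (X ⁻¹' A' i) * μ (Y ⁻¹' B i) :=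
        ENNReal.tsum_le_tsum fun i ↦ by gcongr; exact iInf_le _ i
    _ = ∑' i, μ (X ⁻¹' A' i ∩ Y ⁻¹' B i) :=
        tsum_congr fun i ↦ (hXY.measure_inter_preimage_eq_mul _ _ (hA'm i) (hB i)).symm
    _ = μ (⋃ i, X ⁻¹' A' i ∩ Y ⁻¹' B i) :=
        (measure_iUnion (hdisjX.mono fun i j h ↦ h.mono inter_subset_left inter_subset_left)
          fun i ↦ (hX (hA'm i)).inter (hY (hB i))).symm
    _ ≤ μ (⋃ i, X ⁻¹' A i ∩ Y ⁻¹' B i) :=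
        measure_mono (iUnion_mono fun i ↦ inter_subset_inter_left _ (preimage_mono (hA'A i)))

lemma iIndepFun.indepFun_castAdd_natAdd {n n' : ℕ} {Z : Fin (n + n') → Ω → β}
    (hZ : iIndepFun Z μ) (hZm : ∀ i, Measurable (Z i)) :
    IndepFun (fun ω i ↦ Z (Fin.castAdd n' i) ω) (fun ω j ↦ Z (Fin.natAdd n j) ω) μ := by
  have hST : Disjoint (Finset.univ.map (Fin.castAddEmb n')) (Finset.univ.map (Fin.natAddEmb n)) :=
    Finset.disjoint_left.2 (by simp [Fin.ext_iff]; omega)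
  exact (hZ.indepFun_finset _ _ hST hZm).comp
    (φ := fun v i ↦ v ⟨_, Finset.mem_map_of_mem _ (Finset.mem_univ i)⟩)
    (ψ := fun v j ↦ v ⟨_, Finset.mem_map_of_mem _ (Finset.mem_univ j)⟩)
    (by fun_prop) (by fun_prop)

theorem IndepFun.measure_symmetrization_le [IsFiniteMeasure μ] [Countable ι] {X : Ω → α}
    {Y : Ω → β} (hXY : IndepFun X Y μ) (hX : Measurable X) (hY : Measurable Y)
    {a : ι → α → ℝ} {b : ι → β → ℝ} (ha : ∀ i, Measurable (a i)) (hb : ∀ i, Measurable (b i))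
    (ha01 : ∀ i x, a i x ∈ Icc (0 : ℝ) 1) (hb01 : ∀ i y, b i y ∈ Icc (0 : ℝ) 1)
    {p q : ℝ} (hp : 0 < p) (hq : 0 ≤ q) {s : ι → ℝ} (hs : ∀ i, 0 ≤ s i) {η t γ : ℝ}
    (hη : 0 ≤ η) (ht : 0 < t) (hγ : γ ∈ Ico (0 : ℝ) 1) :
    μ {ω | t ≤ ⨆ i, (a i (X ω) - s i) / √(a i (X ω) + η)} *
        ⨅ i, μ {ω | (b i (Y ω) - s i) / √(s i + kappaPlus t η) ≤ γ * t}
      ≤ μ {ω | (1 - γ) * t ≤ ⨆ i, (a i (X ω) - b i (Y ω)) /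
          √((p * a i (X ω) + q * b i (Y ω)) / (p + q) + η)} := by
  rcases isEmpty_or_nonempty ι with hι | hι
  · simp [ht.not_ge]
  refine le_measure_setOf_le_of_forall_lt (Measurable.iSup fun i ↦ by fun_prop) fun c hc ↦ ?_
  obtain ⟨t', ⟨ht'0, ht't⟩, hct'⟩ := exists_lt_sub_mul_sqrt_kappaPlus_div (c := max c 0) ht hη
    (max_lt hc (by nlinarith [hγ.2]))
  set A := fun i ↦ {x | t' < (a i x - s i) / √(a i x + η)}
  set B := fun i ↦ {y | (b i y - s i) / √(s i + kappaPlus t η) ≤ γ * t}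
  calc _ ≤ μ (X ⁻¹' ⋃ i, A i) * ⨅ i, μ (Y ⁻¹' B i) := by
        gcongr
        · intro ω hω
          exact mem_iUnion.2 (exists_lt_of_lt_ciSup (ht't.trans_le hω))
        · exact subset_rfl
    _ ≤ μ (⋃ i, X ⁻¹' A i ∩ Y ⁻¹' B i) :=
        hXY.measure_preimage_iUnion_mul_iInf_le hX hY
          (fun i ↦ measurableSet_lt (by fun_prop) (by fun_prop))
          fun i ↦ measurableSet_le (by fun_prop) (by fun_prop)
    _ ≤ _ := by
        refine measure_mono (iUnion_subset fun i ω ⟨hω1, hω2⟩ ↦ ?_)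
        refine le_ciSup_of_le ⟨(p + q) / p * √(1 + η), forall_mem_range.2 fun j ↦
          div_sqrt_weightedMean_le hp hq (ha01 _ _) (hb01 _ _) hη⟩ i ?_
        refine ((le_max_left c 0).trans hct'.le).trans ?_
        exact le_div_sqrt_of_le_div_sqrt_of_div_sqrt_le hp hq (hb01 i _).1 (hs i) hη ht'0 ht't.le
          hγ.1 hω1.le hω2 ((le_max_right c 0).trans hct'.le)

end ProbabilityTheory

end Measure

theorem symmetrization_step_general
    {Ω : Type*} [MeasurableSpace Ω] (μ : Measure Ω) [IsProbabilityMeasure μ]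
    {𝒵 : Type*} [MeasurableSpace 𝒵]
    {Λ : Type*} [Countable Λ]
    (S : Λ → 𝒵 → ℝ) (hSmeas : ∀ lam, Measurable (S lam))
    (hSbdd : ∀ lam z, S lam z ∈ Set.Icc (0 : ℝ) 1)
    {n n' : ℕ} (hn : 0 < n)
    (Z : Fin (n + n') → Ω → 𝒵) (hZmeas : ∀ i, Measurable (Z i))
    (hindep : iIndepFun Z μ)
    (ν : Measure 𝒵)
    (shatn : Λ → Ω → ℝ)
    (hshatn : ∀ lam ω, shatn lam ω =
      (1 / (n : ℝ)) * ∑ i : Fin n, S lam (Z (Fin.castAdd n' i) ω))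
    (shatn' : Λ → Ω → ℝ)
    (hshatn' : ∀ lam ω, shatn' lam ω =
      (1 / (n' : ℝ)) * ∑ i : Fin n', S lam (Z (Fin.natAdd n i) ω))
    (shatnn' : Λ → Ω → ℝ)
    (hshatnn' : ∀ lam ω, shatnn' lam ω =
      (1 / ((n : ℝ) + (n' : ℝ))) * ∑ i : Fin (n + n'), S lam (Z i ω))
    (s : Λ → ℝ) (hs : ∀ lam, s lam = ∫ z, S lam z ∂ν)
    (η t γ : ℝ) (hη : 0 ≤ η) (ht : 0 < t) (hγ : γ ∈ Set.Ioo (0 : ℝ) 1) :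
    μ {ω | t ≤ ⨆ lam : Λ, (shatn lam ω - s lam) / Real.sqrt (shatn lam ω + η)} *
        ⨅ lam : Λ,
          μ {ω | (shatn' lam ω - s lam) / Real.sqrt (s lam + kappaPlus t η) ≤ γ * t}
      ≤ μ {ω | (1 - γ) * t ≤
          ⨆ lam : Λ, (shatn lam ω - shatn' lam ω) / Real.sqrt (shatnn' lam ω + η)} := by
  have hweighted :
      ∀ lam ω, shatnn' lam ω = (n * shatn lam ω + n' * shatn' lam ω) / (n + n') := by
    intro lam ω
    rw [hshatnn', hshatn, hshatn', natCast_mul_one_div_mul_sum, natCast_mul_one_div_mul_sum,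
      Fin.sum_univ_add, one_div_mul_eq_div]
  simp only [hweighted, hshatn, hshatn']
  exact (hindep.indepFun_castAdd_natAdd hZmeas).measure_symmetrization_le
    (a := fun lam x ↦ 1 / (n : ℝ) * ∑ i, S lam (x i))
    (b := fun lam y ↦ 1 / (n' : ℝ) * ∑ j, S lam (y j))
    (measurable_pi_lambda _ fun i ↦ hZmeas _) (measurable_pi_lambda _ fun j ↦ hZmeas _)
    (fun lam ↦ by fun_prop) (fun lam ↦ by fun_prop)
    (fun lam x ↦ one_div_mul_sum_mem_Icc fun i ↦ hSbdd lam _)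
    (fun lam y ↦ one_div_mul_sum_mem_Icc fun j ↦ hSbdd lam _)
    (Nat.cast_pos.2 hn) n'.cast_nonneg
    (fun lam ↦ hs lam ▸ integral_nonneg fun z ↦ (hSbdd lam z).1) hη ht
    (Ioo_subset_Ico_self hγ)

/-- symmetrization (ghost sample) step of the self-normalized uniform
concentration bound: the probability of the symmetrized event lower-bounds the
product of the probability of the original event and the infimum over `λ` of the
probability that the ghost empirical mean is not too large. -/
theorem symmetrization_step
    {Ω : Type*} [MeasurableSpace Ω] (μ : Measure Ω) [IsProbabilityMeasure μ]
    {𝒵 : Type*} [MeasurableSpace 𝒵]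
    {Λ : Type*} [Countable Λ]
    (S : Λ → 𝒵 → ℝ) (hSmeas : ∀ lam, Measurable (S lam))
    (hSbdd : ∀ lam z, S lam z ∈ Set.Icc (0 : ℝ) 1)
    {n n' : ℕ} (hn : 0 < n) (hn' : 0 < n')
    (Z : Fin (n + n') → Ω → 𝒵) (hZmeas : ∀ i, Measurable (Z i))
    (hindep : iIndepFun Z μ)
    (ν : Measure 𝒵) [IsProbabilityMeasure ν]
    (hdist : ∀ i, Measure.map (Z i) μ = ν)
    (shatn : Λ → Ω → ℝ)
    (hshatn : ∀ lam ω, shatn lam ω =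
      (1 / (n : ℝ)) * ∑ i : Fin n, S lam (Z (Fin.castAdd n' i) ω))
    (shatn' : Λ → Ω → ℝ)
    (hshatn' : ∀ lam ω, shatn' lam ω =
      (1 / (n' : ℝ)) * ∑ i : Fin n', S lam (Z (Fin.natAdd n i) ω))
    (shatnn' : Λ → Ω → ℝ)
    (hshatnn' : ∀ lam ω, shatnn' lam ω =
      (1 / ((n : ℝ) + (n' : ℝ))) * ∑ i : Fin (n + n'), S lam (Z i ω))
    (s : Λ → ℝ) (hs : ∀ lam, s lam = ∫ z, S lam z ∂ν)
    (η t γ : ℝ) (hη : 0 ≤ η) (ht : 0 < t) (hγ : γ ∈ Set.Ioo (0 : ℝ) 1) :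
    μ {ω | t ≤ ⨆ lam : Λ, (shatn lam ω - s lam) / Real.sqrt (shatn lam ω + η)} *
        ⨅ lam : Λ,
          μ {ω | (shatn' lam ω - s lam) / Real.sqrt (s lam + kappaPlus t η) ≤ γ * t}
      ≤ μ {ω | (1 - γ) * t ≤
          ⨆ lam : Λ, (shatn lam ω - shatn' lam ω) / Real.sqrt (shatnn' lam ω + η)} :=
  symmetrization_step_general μ S hSmeas hSbdd hn Z hZmeas hindep ν shatn hshatn shatn' hshatn'
    shatnn' hshatnn' s hs η t γ hη ht hγ
end

section
/- Consider the integer lattice with nodes (a,b) for integers a, b ≥ 1, and assign to each rightward step from (a,b) to (a,b+1) the weight b/(a+b), and to each upward step from (a,b) to (a+1,b) the weight a/(a+b). For any node (i,j) with i, j ≥ 1 and i + j ≥ 3, the sum over all monotone lattice paths from (1,1) to (i,j) (paths in which each step increases exactly one coordinate by 1) of the product of the weights of the steps along the path equals 1/(i + j − 1). (The same identity, interpreted via the empty path with product 1, holds trivially when (i,j) = (1,1) is excluded; for i+j = 2 other than the root there are no such nodes.) -/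
/-- The weight of a monotone lattice path starting at `(1,1)`, encoded by its
sequence of step choices `c : Fin L → Bool` (`true` = rightward step, which
increases the second coordinate; `false` = upward step, which increases the
first coordinate).  At step `k` the current node is `(a,b)` with
`a = 1 + #{i < k : c i = false}` and `b = 1 + #{i < k : c i = true}`; a rightward
step from `(a,b)` has weight `b/(a+b)` and an upward step has weight `a/(a+b)`. -/
noncomputable def pathWeight (L : ℕ) (c : Fin L → Bool) : ℝ :=
  ∏ k : Fin L,
    (let a : ℝ := 1 + ((Finset.univ.filter fun i : Fin L => i < k ∧ c i = false).card : ℝ)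
     let b : ℝ := 1 + ((Finset.univ.filter fun i : Fin L => i < k ∧ c i = true).card : ℝ)
     if c k then b / (a + b) else a / (a + b))

/-!
At step `k` a path sits at a node `(a, b)` with `a + b = k + 2`, so the denominators along any
path of length `L` multiply to `(L + 1)!`. The numerators of its rightward steps run through
`1, …, t` and those of its upward steps through `1, …, L - t`, so every path with `t` rightward
steps has weight `t! (L - t)! / (L + 1)!`. There are `L.choose t` such paths, hence total
inflow `1 / (L + 1)`.
-/

open Finset Nat

theorem card_filter_card_filter_eq_true {α : Type*} [Fintype α] [DecidableEq α] (t : ℕ) :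
    #{f : α → Bool | #{a | f a = true} = t} = (Fintype.card α).choose t := by
  rw [← Finset.card_univ, ← card_powersetCard]
  refine card_nbij' (fun f => ({a | f a = true} : Finset α)) (fun s a => decide (a ∈ s))
    ?_ ?_ ?_ ?_
  · intro f hf; simp_all [mem_powersetCard]
  · intro s hs; simp_all [mem_powersetCard]
  · intro f _; funext a; simp
  · intro s _; ext a; simp

theorem card_filter_eq_false_add_card_filter_eq_true {α : Type*} [Fintype α] (f : α → Bool) :
    #{a | f a = false} + #{a | f a = true} = Fintype.card α := by
  simpa using card_filter_add_card_filter_not (s := univ) (fun a => f a = false)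

theorem Fin.card_filter_castSucc {L : ℕ} (p : Fin (L + 1) → Prop) [DecidablePred p] :
    #{i | p i} = #{i : Fin L | p i.castSucc} + if p (Fin.last L) then 1 else 0 := by
  rw [card_filter, card_filter, Fin.sum_univ_castSucc]

theorem Fin.card_filter_lt_and {L : ℕ} (m : Fin (L + 1)) (p : Fin (L + 1) → Prop)
    [DecidablePred p] :
    #{i | i < m ∧ p i} = #{i : Fin L | i.castSucc < m ∧ p i.castSucc} := by
  rw [card_filter, card_filter, Fin.sum_univ_castSucc]
  simp [(Fin.le_last m).not_gt]

theorem pathWeight_succ {L : ℕ} (c : Fin (L + 1) → Bool) :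
    pathWeight (L + 1) c = pathWeight L (fun i => c i.castSucc) *
      ((if c (Fin.last L) then 1 + #{i : Fin L | c i.castSucc = true}
        else 1 + #{i : Fin L | c i.castSucc = false} : ℕ) / (L + 2 : ℝ)) := by
  have hL :
      (#{i : Fin L | c i.castSucc = false} + #{i : Fin L | c i.castSucc = true} : ℝ) = L := by
    exact_mod_cast (card_filter_eq_false_add_card_filter_eq_true _).trans (Fintype.card_fin L)
  simp only [pathWeight, Fin.prod_univ_castSucc, Fin.card_filter_lt_and,
    Fin.castSucc_lt_castSucc_iff, Fin.castSucc_lt_last, true_and]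
  have hden : (1 + #{i : Fin L | c i.castSucc = false} : ℝ) +
      (1 + #{i : Fin L | c i.castSucc = true}) = L + 2 := by
    linear_combination hL
  rw [hden]
  split <;> push_cast <;> rfl

theorem pathWeight_mul_factorial (L : ℕ) (c : Fin L → Bool) :
    pathWeight L c * (L + 1)! = (#{k | c k = true})! * (#{k | c k = false})! := by
  induction L with
  | zero => simp [pathWeight]
  | succ L ih =>
    set c' : Fin L → Bool := fun i => c i.castSucc
    calc pathWeight (L + 1) c * (L + 1 + 1)!
        = pathWeight L c' * (L + 1)! *
            (if c (Fin.last L) then 1 + #{i | c' i = true} else 1 + #{i | c' i = false} : ℕ) := by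
          rw [pathWeight_succ, factorial_succ (L + 1)]
          push_cast
          field_simp
          ring
      _ = (#{i | c' i = true})! * (#{i | c' i = false})! *
            (if c (Fin.last L) then 1 + #{i | c' i = true} else 1 + #{i | c' i = false} : ℕ) := by
          rw [ih]
      _ = (#{k | c k = true})! * (#{k | c k = false})! := by
          rw [Fin.card_filter_castSucc (c · = true), Fin.card_filter_castSucc (c · = false)]
          cases c (Fin.last L) <;> simp [c', factorial_succ] <;> ring

theorem sum_pathWeight_filter_card_eq_true {L t : ℕ} (ht : t ≤ L) :
    ∑ c ∈ {c : Fin L → Bool | #{k | c k = true} = t}, pathWeight L c = 1 / (L + 1) := by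
  have hweight (c : Fin L → Bool) (hc : #{k | c k = true} = t) :
      pathWeight L c = t ! * (L - t)! / (L + 1)! := by
    have hfalse : #{k | c k = false} = L - t := by
      have := card_filter_eq_false_add_card_filter_eq_true c
      rw [Fintype.card_fin] at this
      omega
    rw [eq_div_iff (by positivity), pathWeight_mul_factorial, hc, hfalse]
  rw [sum_congr rfl fun c hc => hweight c (mem_filter.mp hc).2, sum_const,
    card_filter_card_filter_eq_true, Fintype.card_fin, nsmul_eq_mul,
    factorial_succ, ← choose_mul_factorial_mul_factorial ht]
  have hchoose : (L.choose t : ℝ) ≠ 0 := by exact_mod_cast (choose_pos ht).ne'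
  push_cast
  field_simp

theorem hamming_graph_balanced_inflow_general
    (i j : ℕ) (hi : 1 ≤ i) (hij : 3 ≤ i + j) :
    ∑ c ∈ Finset.univ.filter
        (fun c : Fin (i + j - 2) → Bool =>
          (Finset.univ.filter fun k => c k = true).card = j - 1),
      pathWeight (i + j - 2) c
      = 1 / ((i : ℝ) + (j : ℝ) - 1) := by
  rw [sum_pathWeight_filter_card_eq_true (by omega), Nat.cast_sub (by omega)]
  push_cast
  ring

/-- balanced inflow for the Hamming graph.  For any node `(i,j)` with
`i, j ≥ 1` and `i + j ≥ 3`, the sum over all monotone lattice paths from `(1,1)` to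
`(i,j)` (encoded as step sequences of length `L = i + j − 2` with exactly `j − 1`
rightward steps) of the product of the step weights equals `1/(i + j − 1)`. -/
theorem hamming_graph_balanced_inflow
    (i j : ℕ) (hi : 1 ≤ i) (hj : 1 ≤ j) (hij : 3 ≤ i + j) :
    ∑ c ∈ Finset.univ.filter
        (fun c : Fin (i + j - 2) → Bool =>
          (Finset.univ.filter fun k => c k = true).card = j - 1),
      pathWeight (i + j - 2) c
      = 1 / ((i : ℝ) + (j : ℝ) - 1) :=
  hamming_graph_balanced_inflow_general i j hi hij
end
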